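/- Let ω = exp(2πi/3) and let z₁, z₂ ∈ S¹ ⊂ ℂ. The six-point set X = {(z₁·ω^m, 0) : m = 0,1,2} ∪ {(0, z₂·ω^m) : m = 0,1,2} ⊂ S³ is an unweighted 2-design on S³; that is, ∑_{x∈X} f(x)/6 = (1/σ(S³)) ∫_{S³} f dσ for every real polynomial f in 4 variables of total degree ≤ 2. -/

import Mathlib

open MeasureTheory Metric MvPolynomial

noncomputable section

local instance (n : ℕ) : DecidableEq (EuclideanSpace ℝ (Fin n)) := Classical.decEq _

abbrev E (n : ℕ) := EuclideanSpace ℝ (Fin n)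

/-- The unit sphere `S^m ⊆ ℝ^(m+1)`. -/
def Sph (m : ℕ) : Set (E (m+1)) := sphere 0 1

/-- Identify `ℂ²` with `ℝ⁴`. -/
def ofC (p : ℂ × ℂ) : E 4 := WithLp.toLp 2 ![p.1.re, p.1.im, p.2.re, p.2.im]

def toC (x : E 4) : ℂ × ℂ := (⟨x 0, x 1⟩, ⟨x 2, x 3⟩)

/-- Identify `ℝ × ℂ` with `ℝ³`. -/
def ofRC (p : ℝ × ℂ) : E 3 := WithLp.toLp 2 ![p.1, p.2.re, p.2.im]

/-- The complex Hopf map on `ℂ²`. -/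
def hopfC (p : ℂ × ℂ) : ℝ × ℂ :=
  (Complex.normSq p.1 - Complex.normSq p.2, 2 * p.1 * star p.2)

/-- The complex Hopf map in real coordinates. -/
def hopf (x : E 4) : E 3 := ofRC (hopfC (toC x))

/-- The circle action on `S³`: `(a,b)·z = (az,bz)`. -/
def act (x : E 4) (z : ℂ) : E 4 := ofC ((toC x).1 * z, (toC x).2 * z)

/-- The unit circle in `ℂ`. -/
def circ : Set ℂ := sphere 0 1

def evalE {m : ℕ} (x : E m) (f : MvPolynomial (Fin m) ℝ) : ℝ :=
  MvPolynomial.eval (fun i => x i) f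

/-- `(X, w)` is a weighted `t`-design on the sphere `S^m ⊆ ℝ^(m+1)`, equipped with its
`m`-dimensional Hausdorff (surface) measure. -/
def IsDesign (m t : ℕ) (X : Finset (E (m+1))) (w : E (m+1) → ℝ) : Prop :=
  ↑X ⊆ Sph m ∧ (∀ x ∈ X, 0 < w x) ∧
  ∀ f : MvPolynomial (Fin (m+1)) ℝ, f.totalDegree ≤ t →
    ∑ x ∈ X, w x * evalE x f =
      (μH[(m:ℝ)] (Sph m)).toReal⁻¹ * ∫ x in Sph m, evalE x f ∂μH[(m:ℝ)]


open scoped ENNReal NNReal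

/-- signed permutation isometry of E 4 -/
def sgnPerm (σ : Equiv.Perm (Fin 4)) (ε : Fin 4 → ℝ) (hε : ∀ i, ε i * ε i = 1) : E 4 ≃ᵢ E 4 where
  toFun x := WithLp.toLp 2 (fun i => ε i * x (σ i))
  invFun y := WithLp.toLp 2 (fun i => ε (σ.symm i) * y (σ.symm i))
  left_inv x := PiLp.ext fun i => by
    show ε (σ.symm i) * (ε (σ.symm i) * x (σ (σ.symm i))) = x i
    rw [Equiv.apply_symm_apply]
    linear_combination (x i) * hε (σ.symm i)
  right_inv y := PiLp.ext fun i => by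
    show ε i * (ε (σ.symm (σ i)) * y (σ.symm (σ i))) = y i
    rw [Equiv.symm_apply_apply]
    linear_combination (y i) * hε i
  isometry_toFun := Isometry.of_dist_eq fun x y => by
    rw [EuclideanSpace.dist_eq, EuclideanSpace.dist_eq]
    congr 1
    refine Fintype.sum_equiv σ _ _ fun i => ?_
    show dist (ε i * x (σ i)) (ε i * y (σ i)) ^ 2 = dist (x (σ i)) (y (σ i)) ^ 2
    rw [Real.dist_eq, Real.dist_eq, sq_abs, sq_abs]
    nlinarith [hε i]

lemma sgnPerm_apply (σ : Equiv.Perm (Fin 4)) (ε : Fin 4 → ℝ) (hε : ∀ i, ε i * ε i = 1)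
    (x : E 4) (i : Fin 4) : sgnPerm σ ε hε x i = ε i * x (σ i) := rfl

lemma sphere_sum_sq {x : E 4} (hx : x ∈ Sph 3) : ∑ i, x i ^ 2 = 1 := by
  have h : √(∑ i, ‖x i‖ ^ 2) = 1 := by
    simpa [Sph, EuclideanSpace.norm_eq] using hx
  have h2 : ∑ i, ‖x i‖ ^ 2 = 1 := by
    have hnn : 0 ≤ ∑ i, ‖x i‖ ^ 2 := Finset.sum_nonneg fun i _ => sq_nonneg _
    nlinarith [Real.sq_sqrt hnn, h]
  simpa [Real.norm_eq_abs, sq_abs] using h2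

lemma mem_sph_iff {x : E 4} : x ∈ Sph 3 ↔ ∑ i, x i ^ 2 = 1 := by
  constructor
  · exact sphere_sum_sq
  · intro h
    simp only [Sph, mem_sphere_iff_norm, sub_zero, EuclideanSpace.norm_eq]
    rw [show ∑ i, ‖x i‖ ^ 2 = ∑ i, x i ^ 2 by simp [Real.norm_eq_abs, sq_abs]]
    rw [h, Real.sqrt_one]

lemma sgnPerm_sum_sq (σ : Equiv.Perm (Fin 4)) (ε : Fin 4 → ℝ) (hε : ∀ i, ε i * ε i = 1)
    (x : E 4) : ∑ i, (sgnPerm σ ε hε x) i ^ 2 = ∑ i, x i ^ 2 :=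
  Fintype.sum_equiv σ _ _ fun i => by
    show (ε i * x (σ i)) ^ 2 = x (σ i) ^ 2
    nlinarith [hε i]

lemma sgnPerm_preimage (σ : Equiv.Perm (Fin 4)) (ε : Fin 4 → ℝ) (hε : ∀ i, ε i * ε i = 1) :
    (sgnPerm σ ε hε) ⁻¹' (Sph 3) = Sph 3 := by
  ext x
  simp only [Set.mem_preimage, mem_sph_iff, sgnPerm_sum_sq]

lemma restrict_sgnPerm (σ : Equiv.Perm (Fin 4)) (ε : Fin 4 → ℝ) (hε : ∀ i, ε i * ε i = 1) :
    Measure.map (sgnPerm σ ε hε) (μH[(3:ℝ)].restrict (Sph 3)) = μH[(3:ℝ)].restrict (Sph 3) := by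
  set T := sgnPerm σ ε hε
  have h1 : (Measure.map T μH[(3:ℝ)]).restrict (Sph 3)
      = Measure.map T (μH[(3:ℝ)].restrict (T ⁻¹' (Sph 3))) :=
    Measure.restrict_map T.continuous.measurable (isClosed_sphere.measurableSet)
  rw [sgnPerm_preimage] at h1
  rw [← h1, T.map_hausdorffMeasure]

lemma integral_comp_sgnPerm (σ : Equiv.Perm (Fin 4)) (ε : Fin 4 → ℝ) (hε : ∀ i, ε i * ε i = 1)
    (f : E 4 → ℝ) :
    ∫ x in Sph 3, f ((sgnPerm σ ε hε) x) ∂μH[(3:ℝ)] = ∫ x in Sph 3, f x ∂μH[(3:ℝ)] := by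
  conv_rhs => rw [← restrict_sgnPerm σ ε hε]
  exact (MeasureTheory.integral_map_equiv (sgnPerm σ ε hε).toHomeomorph.toMeasurableEquiv f).symm

/-- coordinate projection dropping coordinate 0 -/
def proj3 (x : E 4) : Fin 3 → ℝ := fun i => x i.succ

lemma coord_dist_le (x y : E 4) (j : Fin 4) : dist (x j) (y j) ≤ dist x y := by
  rw [EuclideanSpace.dist_eq]
  have h1 : dist (x j) (y j) = √(dist (x j) (y j) ^ 2) := by
    rw [Real.sqrt_sq dist_nonneg]
  rw [h1]
  apply Real.sqrt_le_sqrt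
  exact Finset.single_le_sum (f := fun i => dist (x i) (y i) ^ 2)
    (fun i _ => sq_nonneg _) (Finset.mem_univ j)

lemma proj3_lipschitz : LipschitzWith 1 proj3 := by
  rw [lipschitzWith_iff_dist_le_mul]
  intro x y
  rw [NNReal.coe_one, one_mul]
  rw [dist_pi_le_iff dist_nonneg]
  intro i
  exact coord_dist_le x y i.succ

lemma cube_subset_proj3_image :
    (Set.univ.pi fun _ : Fin 3 => Set.Icc (-(2⁻¹) : ℝ) 2⁻¹) ⊆ proj3 '' Sph 3 := by
  intro y hy
  simp only [Set.mem_pi, Set.mem_univ, forall_true_left, Set.mem_Icc] at hy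
  have hsum : ∑ i, y i ^ 2 ≤ 3/4 := by
    have : ∀ i, y i ^ 2 ≤ 1/4 := fun i => by
      have h := hy i
      nlinarith [h.1, h.2]
    calc ∑ i, y i ^ 2 ≤ ∑ _i : Fin 3, (1/4 : ℝ) :=
          Finset.sum_le_sum fun i _ => this i
      _ = 3/4 := by simp; norm_num
  set t := √(1 - ∑ i, y i ^ 2) with ht
  refine ⟨WithLp.toLp 2 (Fin.cons t y : ∀ _ : Fin 4, ℝ), ?_, ?_⟩
  · rw [mem_sph_iff]
    rw [Fin.sum_univ_succ]
    have h0 : (WithLp.toLp 2 (Fin.cons t y : ∀ _ : Fin 4, ℝ) : E 4) 0 = t := rfl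
    have hs : ∀ i : Fin 3, (WithLp.toLp 2 (Fin.cons t y : ∀ _ : Fin 4, ℝ) : E 4) i.succ = y i := fun i => rfl
    rw [h0]
    simp only [hs, Fin.cons_succ]
    rw [ht, Real.sq_sqrt (by linarith)]
    ring
  · funext i
    rfl

lemma hausdorffMeasure_sph_pos : 0 < μH[(3:ℝ)] (Sph 3) := by
  have h1 : μH[(3:ℝ)] (proj3 '' Sph 3) ≤ 1 ^ (3:ℝ) * μH[(3:ℝ)] (Sph 3) :=
    proj3_lipschitz.hausdorffMeasure_image_le (by norm_num) _
  have h2 : (1 : ℝ≥0∞) ≤ μH[(3:ℝ)] (proj3 '' Sph 3) := by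
    calc (1:ℝ≥0∞) = μH[(3:ℝ)] (Set.univ.pi fun _ : Fin 3 => Set.Icc (-(2⁻¹) : ℝ) 2⁻¹) := by
          rw [show ((3:ℝ)) = ((Fintype.card (Fin 3) : ℕ):ℝ) by simp]
          rw [MeasureTheory.hausdorffMeasure_pi_real]
          rw [volume_pi_pi]
          simp [Real.volume_Icc]
          norm_num
      _ ≤ _ := measure_mono cube_subset_proj3_image
  have : (1:ℝ≥0∞) ≤ μH[(3:ℝ)] (Sph 3) := by
    calc (1:ℝ≥0∞) ≤ μH[(3:ℝ)] (proj3 '' Sph 3) := h2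
    _ ≤ 1 ^ (3:ℝ) * μH[(3:ℝ)] (Sph 3) := h1
    _ = μH[(3:ℝ)] (Sph 3) := by simp
  exact lt_of_lt_of_le (by norm_num) this

lemma sqrt_lip {a b : ℝ} (ha : 1/4 ≤ a) (hb : 1/4 ≤ b) : |√a - √b| ≤ |a - b| := by
  have h1 : √a * √a = a := Real.mul_self_sqrt (by linarith)
  have h2 : √b * √b = b := Real.mul_self_sqrt (by linarith)
  have h3 : (1:ℝ)/2 ≤ √a := by
    rw [show (1:ℝ)/2 = √(1/4) by rw [show (1:ℝ)/4 = (1/2)^2 by norm_num, Real.sqrt_sq]; norm_num]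
    exact Real.sqrt_le_sqrt ha
  have h4 : (1:ℝ)/2 ≤ √b := by
    rw [show (1:ℝ)/2 = √(1/4) by rw [show (1:ℝ)/4 = (1/2)^2 by norm_num, Real.sqrt_sq]; norm_num]
    exact Real.sqrt_le_sqrt hb
  rw [abs_le]
  constructor
  · nlinarith [le_abs_self (a - b), neg_abs_le (a - b)]
  · nlinarith [le_abs_self (a - b), neg_abs_le (a - b)]

/-- graph map of the cap -/
def capG (y : Fin 3 → ℝ) : E 4 := WithLp.toLp 2 (Fin.cons (√(1 - ∑ i, y i ^ 2)) y : ∀ _ : Fin 4, ℝ)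

def capD : Set (Fin 3 → ℝ) := {y | ∑ i, y i ^ 2 ≤ 3/4}

lemma capG_lip : LipschitzOnWith 7 capG capD := by
  rw [lipschitzOnWith_iff_dist_le_mul]
  intro y hy z hz
  have hy' : ∑ i, y i ^ 2 ≤ 3/4 := hy
  have hz' : ∑ i, z i ^ 2 ≤ 3/4 := hz
  have hyb : ∀ i, |y i| ≤ 1 := fun i => by
    have : y i ^ 2 ≤ 3/4 := le_trans (Finset.single_le_sum
      (f := fun i => y i ^ 2) (fun i _ => sq_nonneg _) (Finset.mem_univ i)) hy'
    nlinarith [abs_nonneg (y i), sq_abs (y i)]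
  have hzb : ∀ i, |z i| ≤ 1 := fun i => by
    have : z i ^ 2 ≤ 3/4 := le_trans (Finset.single_le_sum
      (f := fun i => z i ^ 2) (fun i _ => sq_nonneg _) (Finset.mem_univ i)) hz'
    nlinarith [abs_nonneg (z i), sq_abs (z i)]
  have ht0 : 0 ≤ dist y z := dist_nonneg
  have hcoord : ∀ i, |y i - z i| ≤ dist y z := fun i => by
    have := dist_le_pi_dist y z i
    rwa [Real.dist_eq] at this
  have hsumdiff : |(1 - ∑ i, y i ^ 2) - (1 - ∑ i, z i ^ 2)| ≤ 6 * dist y z := by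
    have heq : (1 - ∑ i, y i ^ 2) - (1 - ∑ i, z i ^ 2) = ∑ i, (z i ^ 2 - y i ^ 2) := by
      rw [Finset.sum_sub_distrib]; ring
    rw [heq]
    have hterm : ∀ i ∈ Finset.univ, |z i ^ 2 - y i ^ 2| ≤ 2 * dist y z := by
      intro i _
      have h1 : z i ^ 2 - y i ^ 2 = (z i + y i) * (z i - y i) := by ring
      rw [h1, abs_mul]
      have h2 : |z i + y i| ≤ 2 := by
        calc |z i + y i| ≤ |z i| + |y i| := abs_add_le _ _
          _ ≤ 2 := by linarith [hyb i, hzb i]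
      have h3 : |z i - y i| ≤ dist y z := by rw [abs_sub_comm]; exact hcoord i
      exact mul_le_mul h2 h3 (abs_nonneg _) (by norm_num)
    calc |∑ i, (z i ^ 2 - y i ^ 2)| ≤ ∑ i, |z i ^ 2 - y i ^ 2| := Finset.abs_sum_le_sum_abs _ _
      _ ≤ ∑ _i : Fin 3, 2 * dist y z := Finset.sum_le_sum hterm
      _ = 6 * dist y z := by
          rw [Finset.sum_const, Finset.card_univ, Fintype.card_fin]
          push_cast
          ring
  have hsq : |√(1 - ∑ i, y i ^ 2) - √(1 - ∑ i, z i ^ 2)| ≤ 6 * dist y z :=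
    le_trans (sqrt_lip (by linarith) (by linarith)) hsumdiff
  rw [EuclideanSpace.dist_eq]
  have hexp : ∑ i : Fin 4, dist (capG y i) (capG z i) ^ 2
      = dist (√(1 - ∑ i, y i ^ 2)) (√(1 - ∑ i, z i ^ 2)) ^ 2
        + ∑ i : Fin 3, dist (y i) (z i) ^ 2 := by
    rw [Fin.sum_univ_succ]
    rfl
  rw [hexp]
  have hb1 : dist (√(1 - ∑ i, y i ^ 2)) (√(1 - ∑ i, z i ^ 2)) ^ 2 ≤ 36 * dist y z ^ 2 := by
    rw [Real.dist_eq]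
    nlinarith [hsq, abs_nonneg (√(1 - ∑ i, y i ^ 2) - √(1 - ∑ i, z i ^ 2))]
  have hb2 : ∑ i : Fin 3, dist (y i) (z i) ^ 2 ≤ 3 * dist y z ^ 2 := by
    have hterm2 : ∀ i ∈ Finset.univ, dist (y i) (z i) ^ 2 ≤ dist y z ^ 2 := by
      intro i _
      have h := hcoord i
      rw [Real.dist_eq]
      nlinarith [abs_nonneg (y i - z i)]
    calc ∑ i : Fin 3, dist (y i) (z i) ^ 2 ≤ ∑ _i : Fin 3, dist y z ^ 2 :=
          Finset.sum_le_sum hterm2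
      _ = 3 * dist y z ^ 2 := by
          rw [Finset.sum_const, Finset.card_univ, Fintype.card_fin]
          push_cast
          ring
  calc √(dist (√(1 - ∑ i, y i ^ 2)) (√(1 - ∑ i, z i ^ 2)) ^ 2 + ∑ i : Fin 3, dist (y i) (z i) ^ 2)
      ≤ √(49 * dist y z ^ 2) := Real.sqrt_le_sqrt (by nlinarith [sq_nonneg (dist y z)])
    _ = 7 * dist y z := by
        rw [show (49 : ℝ) * dist y z ^ 2 = (7 * dist y z) ^ 2 by ring, Real.sqrt_sq (by linarith)]
    _ = (7 : ℝ≥0) * dist y z := by norm_num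

lemma capA_lt_top : μH[(3:ℝ)] (capG '' capD) < ⊤ := by
  have h1 : μH[(3:ℝ)] (capG '' capD) ≤ (7:ℝ≥0) ^ (3:ℝ) * μH[(3:ℝ)] capD :=
    capG_lip.hausdorffMeasure_image_le (by norm_num)
  have h2 : μH[(3:ℝ)] capD ≤ 8 := by
    have hsub : capD ⊆ Set.univ.pi fun _ : Fin 3 => Set.Icc (-1 : ℝ) 1 := by
      intro y hy
      simp only [Set.mem_pi, Set.mem_univ, forall_true_left, Set.mem_Icc]
      intro i
      have : y i ^ 2 ≤ 3/4 := le_trans (Finset.single_le_sum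
        (f := fun i => y i ^ 2) (fun i _ => sq_nonneg _) (Finset.mem_univ i)) hy
      constructor <;> nlinarith
    calc μH[(3:ℝ)] capD ≤ μH[(3:ℝ)] (Set.univ.pi fun _ : Fin 3 => Set.Icc (-1 : ℝ) 1) :=
          measure_mono hsub
      _ = 8 := by
          rw [show ((3:ℝ)) = ((Fintype.card (Fin 3) : ℕ):ℝ) by simp]
          rw [MeasureTheory.hausdorffMeasure_pi_real, volume_pi_pi]
          simp [Real.volume_Icc]
          rw [show (1:ℝ) + 1 = 2 by norm_num, ← ENNReal.ofReal_pow (by norm_num)]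
          norm_num
  calc μH[(3:ℝ)] (capG '' capD) ≤ (7:ℝ≥0) ^ (3:ℝ) * μH[(3:ℝ)] capD := h1
    _ ≤ (7:ℝ≥0) ^ (3:ℝ) * 8 := by
        exact mul_le_mul_right h2 _
    _ < ⊤ := by
        apply ENNReal.mul_lt_top
        · exact ENNReal.rpow_lt_top_of_nonneg (by norm_num) (by simp)
        · norm_num

lemma eps_one : ∀ i : Fin 4, (fun _ : Fin 4 => (1:ℝ)) i * (fun _ : Fin 4 => (1:ℝ)) i = 1 :=
  fun _ => by norm_num

lemma eps_neg : ∀ i : Fin 4, (fun _ : Fin 4 => (-1:ℝ)) i * (fun _ : Fin 4 => (-1:ℝ)) i = 1 :=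
  fun _ => by norm_num

lemma mem_cap_of_half {u : E 4} (hu : u ∈ Sph 3) (h0 : 1/2 ≤ u 0) : u ∈ capG '' capD := by
  have hsum : ∑ i : Fin 4, u i ^ 2 = 1 := mem_sph_iff.mp hu
  rw [Fin.sum_univ_succ] at hsum
  have htail : ∑ i : Fin 3, u i.succ ^ 2 = 1 - u 0 ^ 2 := by linarith
  refine ⟨fun i => u i.succ, ?_, ?_⟩
  · show ∑ i : Fin 3, u i.succ ^ 2 ≤ 3/4
    rw [htail]
    nlinarith
  · ext j
    refine Fin.cases ?_ (fun i => rfl) j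
    show √(1 - ∑ i : Fin 3, u i.succ ^ 2) = u 0
    rw [htail, show 1 - (1 - u 0 ^ 2) = u 0 ^ 2 by ring, Real.sqrt_sq (by linarith)]

lemma sph_cover : Sph 3 ⊆ ⋃ i : Fin 4,
    ((sgnPerm (Equiv.swap 0 i) _ eps_one) ⁻¹' (capG '' capD) ∪
     (sgnPerm (Equiv.swap 0 i) _ eps_one) ⁻¹' ((sgnPerm 1 _ eps_neg) ⁻¹' (capG '' capD))) := by
  intro x hx
  have hsum : ∑ i : Fin 4, x i ^ 2 = 1 := mem_sph_iff.mp hx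
  have hex : ∃ i, 1/4 ≤ x i ^ 2 := by
    by_contra h
    push_neg at h
    have : ∑ i : Fin 4, x i ^ 2 < ∑ _i : Fin 4, (1/4 : ℝ) :=
      Finset.sum_lt_sum_of_nonempty Finset.univ_nonempty fun i _ => h i
    rw [Finset.sum_const, Finset.card_univ, Fintype.card_fin] at this
    norm_num at this
    linarith
  obtain ⟨i, hi⟩ := hex
  set T := sgnPerm (Equiv.swap 0 i) _ eps_one with hT
  have hTx : T x ∈ Sph 3 := by
    have := sgnPerm_preimage (Equiv.swap 0 i) _ eps_one
    rw [Set.ext_iff] at this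
    exact (this x).mpr hx
  have hTx0 : T x 0 = x i := by
    rw [sgnPerm_apply, Equiv.swap_apply_left, one_mul]
  apply Set.mem_iUnion.mpr
  refine ⟨i, ?_⟩
  rcases le_or_gt 0 (x i) with hpos | hneg
  · left
    show T x ∈ capG '' capD
    apply mem_cap_of_half hTx
    rw [hTx0]
    nlinarith
  · right
    show sgnPerm 1 _ eps_neg (T x) ∈ capG '' capD
    have hNx : sgnPerm 1 _ eps_neg (T x) ∈ Sph 3 := by
      have := sgnPerm_preimage 1 _ eps_neg
      rw [Set.ext_iff] at this
      exact (this (T x)).mpr hTx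
    apply mem_cap_of_half hNx
    rw [sgnPerm_apply]
    show -1 * T x ((1 : Equiv.Perm (Fin 4)) 0) ≥ 1/2
    rw [show ((1 : Equiv.Perm (Fin 4)) 0) = 0 from rfl, hTx0]
    nlinarith

lemma sph_lt_top : μH[(3:ℝ)] (Sph 3) < ⊤ := by
  have hbound := measure_mono (μ := μH[(3:ℝ)]) sph_cover
  have hle : μH[(3:ℝ)] (⋃ i : Fin 4,
      ((sgnPerm (Equiv.swap 0 i) _ eps_one) ⁻¹' (capG '' capD) ∪
       (sgnPerm (Equiv.swap 0 i) _ eps_one) ⁻¹' ((sgnPerm 1 _ eps_neg) ⁻¹' (capG '' capD))))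
      ≤ ∑ i : Fin 4, (2 * μH[(3:ℝ)] (capG '' capD)) := by
    refine le_trans (measure_iUnion_fintype_le _ _) (Finset.sum_le_sum fun i _ => ?_)
    refine le_trans (measure_union_le _ _) ?_
    rw [IsometryEquiv.hausdorffMeasure_preimage, IsometryEquiv.hausdorffMeasure_preimage,
      IsometryEquiv.hausdorffMeasure_preimage, two_mul]
  refine lt_of_le_of_lt (le_trans hbound hle) ?_
  rw [Finset.sum_const, Finset.card_univ, Fintype.card_fin]
  have h := capA_lt_top
  have h2 : (2 : ℝ≥0∞) * μH[(3:ℝ)] (capG '' capD) < ⊤ :=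
    ENNReal.mul_lt_top (by norm_num) h
  calc 4 • (2 * μH[(3:ℝ)] (capG '' capD)) = (4:ℝ≥0∞) * (2 * μH[(3:ℝ)] (capG '' capD)) := by
        simp [nsmul_eq_mul]
    _ < ⊤ := ENNReal.mul_lt_top (by norm_num) h2

lemma sph_meas : MeasurableSet (Sph 3) := by
  unfold Sph; exact isClosed_sphere.measurableSet

instance : IsFiniteMeasure (μH[(3:ℝ)].restrict (Sph 3)) := by
  constructor
  rw [Measure.restrict_apply_univ]
  exact sph_lt_top

lemma integrableOn_sph {f : E 4 → ℝ} (hf : Continuous f) :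
    IntegrableOn f (Sph 3) μH[(3:ℝ)] := by
  obtain ⟨C, hC⟩ : ∃ C, ∀ x ∈ Sph 3, ‖f x‖ ≤ C := by
    obtain ⟨C, hC⟩ := (isCompact_sphere (0 : E 4) 1).exists_bound_of_continuousOn
      hf.continuousOn
    exact ⟨C, fun x hx => hC x hx⟩
  refine Integrable.mono' (integrable_const C)
    (hf.aestronglyMeasurable) ?_
  rw [ae_restrict_iff' sph_meas]
  exact Filter.Eventually.of_forall hC

lemma int_one : ∫ _x in Sph 3, (1:ℝ) ∂μH[(3:ℝ)] = (μH[(3:ℝ)] (Sph 3)).toReal := by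
  rw [setIntegral_const]
  simp
  rfl

lemma int_coord (i : Fin 4) : ∫ x in Sph 3, x i ∂μH[(3:ℝ)] = 0 := by
  have h := integral_comp_sgnPerm 1 _ eps_neg (fun x => x i)
  have h2 : ∀ x : E 4, (sgnPerm 1 _ eps_neg x) i = -(x i) := fun x => by
    rw [sgnPerm_apply]
    show -1 * x ((1 : Equiv.Perm (Fin 4)) i) = -(x i)
    rw [show ((1 : Equiv.Perm (Fin 4)) i) = i from rfl]
    ring
  simp only [h2] at h
  rw [integral_neg] at h
  linarith

lemma int_cross {i j : Fin 4} (hij : i ≠ j) :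
    ∫ x in Sph 3, (x i * x j) ∂μH[(3:ℝ)] = 0 := by
  set ε : Fin 4 → ℝ := fun k => if k = i then -1 else 1 with hε
  have hsq : ∀ k, ε k * ε k = 1 := fun k => by
    by_cases h : k = i <;> simp [hε, h]
  have h := integral_comp_sgnPerm 1 ε hsq (fun x => x i * x j)
  have h2 : ∀ x : E 4, (sgnPerm 1 ε hsq x) i * (sgnPerm 1 ε hsq x) j = -(x i * x j) := fun x => by
    rw [sgnPerm_apply, sgnPerm_apply]
    show ε i * x ((1 : Equiv.Perm (Fin 4)) i) * (ε j * x ((1 : Equiv.Perm (Fin 4)) j)) = _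
    rw [show ((1 : Equiv.Perm (Fin 4)) i) = i from rfl, show ((1 : Equiv.Perm (Fin 4)) j) = j from rfl]
    rw [show ε i = -1 by simp [hε], show ε j = 1 by simp [hε, hij.symm]]
    ring
  simp only [h2] at h
  rw [integral_neg] at h
  linarith

lemma int_sq_eq (i j : Fin 4) :
    ∫ x in Sph 3, (x i ^ 2) ∂μH[(3:ℝ)] = ∫ x in Sph 3, (x j ^ 2) ∂μH[(3:ℝ)] := by
  have h := integral_comp_sgnPerm (Equiv.swap i j) _ eps_one (fun x => x i ^ 2)
  have h2 : ∀ x : E 4, (sgnPerm (Equiv.swap i j) _ eps_one x) i ^ 2 = x j ^ 2 := fun x => by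
    rw [sgnPerm_apply]
    show ((1:ℝ) * x (Equiv.swap i j i)) ^ 2 = _
    rw [Equiv.swap_apply_left, one_mul]
  simp only [h2] at h
  exact h.symm

lemma int_sq (i : Fin 4) :
    ∫ x in Sph 3, (x i ^ 2) ∂μH[(3:ℝ)] = (μH[(3:ℝ)] (Sph 3)).toReal / 4 := by
  have hcont : ∀ j : Fin 4, Continuous fun x : E 4 => x j ^ 2 := fun j => by
    exact ((EuclideanSpace.proj j : E 4 →L[ℝ] ℝ).continuous).pow 2
  have hsum : ∑ j : Fin 4, ∫ x in Sph 3, (x j ^ 2) ∂μH[(3:ℝ)] = (μH[(3:ℝ)] (Sph 3)).toReal := by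
    rw [← integral_finset_sum _ (fun j _ => integrableOn_sph (hcont j))]
    rw [show ∫ x in Sph 3, (∑ j : Fin 4, x j ^ 2) ∂μH[(3:ℝ)]
        = ∫ _x in Sph 3, (1:ℝ) ∂μH[(3:ℝ)] from
      setIntegral_congr_fun sph_meas fun x hx => mem_sph_iff.mp hx]
    exact int_one
  have hall : ∀ j : Fin 4, ∫ x in Sph 3, (x j ^ 2) ∂μH[(3:ℝ)]
      = ∫ x in Sph 3, (x i ^ 2) ∂μH[(3:ℝ)] := fun j => int_sq_eq j i
  rw [Finset.sum_congr rfl (fun j _ => hall j), Finset.sum_const, Finset.card_univ,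
    Fintype.card_fin] at hsum
  have : (4:ℝ) * ∫ x in Sph 3, (x i ^ 2) ∂μH[(3:ℝ)] = (μH[(3:ℝ)] (Sph 3)).toReal := by
    rw [← hsum]; simp [nsmul_eq_mul]
  linarith

/-- the cube-root-of-unity exponential -/
def cbr (m : Fin 3) : ℂ := Complex.exp (2 * Real.pi * Complex.I * ((m : ℕ) : ℂ) / 3)

lemma em_abs (m : Fin 3) : ‖cbr m‖ = 1 := by
  have h : (2 * (Real.pi:ℂ) * Complex.I * ((m : ℕ) : ℂ) / 3)
      = ((2 * Real.pi * (m:ℕ) / 3 : ℝ) : ℂ) * Complex.I := by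
    push_cast
    ring
  rw [cbr, h, Complex.norm_exp_ofReal_mul_I]

def om : ℂ := Complex.exp (2 * Real.pi * Complex.I / 3)

lemma om_cube : om ^ 3 = 1 := by
  rw [om, ← Complex.exp_nat_mul]
  rw [show (3:ℕ) * (2 * (Real.pi:ℂ) * Complex.I / 3) = 2 * Real.pi * Complex.I by push_cast; ring]
  exact Complex.exp_two_pi_mul_I

lemma om_ne_one : om ≠ 1 := by
  rw [om]
  intro h
  rw [Complex.exp_eq_one_iff] at h
  obtain ⟨n, hn⟩ := h
  have hpi : (Real.pi : ℂ) ≠ 0 := by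
    exact_mod_cast Real.pi_ne_zero
  have hI : Complex.I ≠ 0 := Complex.I_ne_zero
  have h3 : (3 : ℂ) * ((n:ℂ) * (2 * Real.pi * Complex.I)) = 3 * (2 * Real.pi * Complex.I / 3) := by
    rw [← hn]
  have h4 : ((3 * n - 1 : ℤ) : ℂ) * (2 * Real.pi * Complex.I) = 0 := by
    push_cast
    push_cast at h3
    ring_nf
    ring_nf at h3
    linear_combination h3
  have h5 : ((3 * n - 1 : ℤ) : ℂ) = 0 := by
    rcases mul_eq_zero.mp h4 with h | h
    · exact h
    · exfalso
      rcases mul_eq_zero.mp h with h' | h'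
      · rcases mul_eq_zero.mp h' with h'' | h''
        · norm_num at h''
        · exact hpi h''
      · exact hI h'
  have h6 : (3 * n - 1 : ℤ) = 0 := by exact_mod_cast h5
  omega

lemma om_sum : 1 + om + om ^ 2 = 0 := by
  have h : (om - 1) * (1 + om + om ^ 2) = om ^ 3 - 1 := by ring
  rw [om_cube, sub_self] at h
  rcases mul_eq_zero.mp h with h' | h'
  · exact absurd (by linear_combination h' : om = 1) om_ne_one
  · exact h'

lemma em_zero : cbr 0 = 1 := by
  rw [cbr]
  norm_num

lemma em_one : cbr 1 = om := by
  rw [cbr, om]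
  norm_num

lemma em_two : cbr 2 = om ^ 2 := by
  rw [cbr, om, ← Complex.exp_nat_mul,
    show (((2:Fin 3):ℕ):ℂ) = 2 by norm_num]
  congr 1
  ring

lemma em_sum : ∑ m : Fin 3, cbr m = 0 := by
  rw [Fin.sum_univ_three, em_zero, em_one, em_two]
  exact om_sum

lemma em_sq_sum : ∑ m : Fin 3, (cbr m) ^ 2 = 0 := by
  rw [Fin.sum_univ_three, em_zero, em_one, em_two]
  have h3 := om_cube
  have hs := om_sum
  linear_combination om * h3 + hs

lemma sq_re (w : ℂ) : (w ^ 2).re = w.re ^ 2 - w.im ^ 2 := by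
  rw [pow_two, Complex.mul_re]; ring

lemma sq_im (w : ℂ) : (w ^ 2).im = 2 * (w.re * w.im) := by
  rw [pow_two, Complex.mul_im]; ring

section trig

variable (z : ℂ)

lemma trig_norm (hz : ‖z‖ = 1) (m : Fin 3) : (z * cbr m).re ^ 2 + (z * cbr m).im ^ 2 = 1 := by
  have h : ‖z * cbr m‖ = 1 := by
    rw [norm_mul, hz, em_abs, mul_one]
  have h2 : Complex.normSq (z * cbr m) = 1 := by
    rw [← Complex.sq_norm, h]; norm_num
  rw [Complex.normSq_apply] at h2
  nlinarith [h2]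

lemma trig_sum : ∑ m : Fin 3, z * cbr m = 0 := by
  rw [← Finset.mul_sum, em_sum, mul_zero]

lemma trig_sq_sum : ∑ m : Fin 3, (z * cbr m) ^ 2 = 0 := by
  have : ∀ m : Fin 3, (z * cbr m) ^ 2 = z ^ 2 * (cbr m) ^ 2 := fun m => by ring
  simp only [this]
  rw [← Finset.mul_sum, em_sq_sum, mul_zero]

lemma trig_re : ∑ m : Fin 3, (z * cbr m).re = 0 := by
  have := congrArg Complex.re (trig_sum z)
  rwa [Complex.re_sum, Complex.zero_re] at this

lemma trig_im : ∑ m : Fin 3, (z * cbr m).im = 0 := by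
  have := congrArg Complex.im (trig_sum z)
  rwa [Complex.im_sum, Complex.zero_im] at this

lemma trig_resq_sub : ∑ m : Fin 3, ((z * cbr m).re ^ 2 - (z * cbr m).im ^ 2) = 0 := by
  have := congrArg Complex.re (trig_sq_sum z)
  rw [Complex.re_sum, Complex.zero_re] at this
  rw [← this]
  apply Finset.sum_congr rfl
  intro m _
  rw [sq_re]

lemma trig_re_im : ∑ m : Fin 3, (z * cbr m).re * (z * cbr m).im = 0 := by
  have := congrArg Complex.im (trig_sq_sum z)
  rw [Complex.im_sum, Complex.zero_im] at this
  have h2 : ∑ m : Fin 3, ((z * cbr m) ^ 2).im = ∑ m : Fin 3, 2 * ((z * cbr m).re * (z * cbr m).im) := by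
    exact Finset.sum_congr rfl fun m _ => sq_im _
  rw [h2, ← Finset.mul_sum] at this
  linarith [this]

lemma trig_resq (hz : ‖z‖ = 1) : ∑ m : Fin 3, (z * cbr m).re ^ 2 = 3 / 2 := by
  have h1 : ∑ m : Fin 3, ((z * cbr m).re ^ 2 + (z * cbr m).im ^ 2) = 3 := by
    rw [Finset.sum_congr rfl fun m _ => trig_norm z hz m]
    simp
  have h2 := trig_resq_sub z
  rw [Finset.sum_add_distrib] at h1
  rw [Finset.sum_sub_distrib] at h2
  linarith

lemma trig_imsq (hz : ‖z‖ = 1) : ∑ m : Fin 3, (z * cbr m).im ^ 2 = 3 / 2 := by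
  have h1 : ∑ m : Fin 3, ((z * cbr m).re ^ 2 + (z * cbr m).im ^ 2) = 3 := by
    rw [Finset.sum_congr rfl fun m _ => trig_norm z hz m]
    simp
  have h2 := trig_resq_sub z
  rw [Finset.sum_add_distrib] at h1
  rw [Finset.sum_sub_distrib] at h2
  linarith

end trig

lemma ofC_0 (p : ℂ × ℂ) : ofC p 0 = p.1.re := rfl
lemma ofC_1 (p : ℂ × ℂ) : ofC p 1 = p.1.im := rfl
lemma ofC_2 (p : ℂ × ℂ) : ofC p 2 = p.2.re := rfl
lemma ofC_3 (p : ℂ × ℂ) : ofC p 3 = p.2.im := rfl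

lemma key (z₁ z₂ : ℂ) (h1 : ‖z₁‖ = 1) (h2 : ‖z₂‖ = 1)
    (a b c e : ℕ) (hdeg : a + b + c + e ≤ 2) :
    ((∑ m : Fin 3, ((z₁ * cbr m).re ^ a * (z₁ * cbr m).im ^ b * (0:ℝ) ^ c * (0:ℝ) ^ e))
      + ∑ m : Fin 3, ((0:ℝ) ^ a * (0:ℝ) ^ b * (z₂ * cbr m).re ^ c * (z₂ * cbr m).im ^ e)) / 6
    = (μH[(3:ℝ)] (Sph 3)).toReal⁻¹
        * ∫ x in Sph 3, (x 0 ^ a * x 1 ^ b * x 2 ^ c * x 3 ^ e) ∂μH[(3:ℝ)] := by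
  have hc : 0 < (μH[(3:ℝ)] (Sph 3)).toReal :=
    ENNReal.toReal_pos hausdorffMeasure_sph_pos.ne' sph_lt_top.ne
  have hc' : (μH[(3:ℝ)] (Sph 3)).toReal ≠ 0 := hc.ne'
  have ha : a ≤ 2 := by omega
  have hb : b ≤ 2 := by omega
  have hcc : c ≤ 2 := by omega
  have he : e ≤ 2 := by omega
  interval_cases a <;> interval_cases b <;> interval_cases c <;> interval_cases e <;>
    simp only [pow_zero, pow_one, one_mul, mul_one, zero_mul, mul_zero, zero_pow,
      ne_eq, OfNat.ofNat_ne_zero, not_false_eq_true, Finset.sum_const_zero,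
      add_zero, zero_add] <;>
    first
      | (exfalso; omega)
      | (rw [int_one, Finset.sum_const, inv_mul_cancel₀ hc']; simp; norm_num)
      | (rw [trig_re z₁, int_coord]; norm_num)
      | (rw [trig_im z₁, int_coord]; norm_num)
      | (rw [trig_re z₂, int_coord]; norm_num)
      | (rw [trig_im z₂, int_coord]; norm_num)
      | (rw [trig_re_im z₁, int_cross (by decide)]; norm_num)
      | (rw [trig_re_im z₂, int_cross (by decide)]; norm_num)
      | (rw [int_cross (by decide)]; norm_num)
      | (rw [trig_resq z₁ h1, int_sq]; field_simp; ring)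
      | (rw [trig_imsq z₁ h1, int_sq]; field_simp; ring)
      | (rw [trig_resq z₂ h2, int_sq]; field_simp; ring)
      | (rw [trig_imsq z₂ h2, int_sq]; field_simp; ring)

lemma om_sq_ne_one : om ^ 2 ≠ 1 := by
  intro h
  apply om_ne_one
  calc om = om ^ 3 * om := by rw [om_cube]; ring
    _ = (om ^ 2) ^ 2 := by ring
    _ = 1 := by rw [h]; norm_num

lemma om_sq_ne_om : om ^ 2 ≠ om := by
  intro h
  apply om_ne_one
  have h1 : om ^ 3 = om := by
    calc om ^ 3 = om ^ 2 * om := by ring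
      _ = om * om := by rw [h]
      _ = om ^ 2 := by ring
      _ = om := h
  exact (om_cube.symm.trans h1).symm

lemma cbr_inj : Function.Injective cbr := by
  intro a b h
  fin_cases a <;> fin_cases b <;>
    simp only [show (⟨0, by norm_num⟩ : Fin 3) = 0 from rfl,
      show (⟨1, by norm_num⟩ : Fin 3) = 1 from rfl,
      show (⟨2, by norm_num⟩ : Fin 3) = 2 from rfl,
      em_zero, em_one, em_two] at h ⊢ <;>
    first
      | rfl
      | exact absurd h om_ne_one.symm
      | exact absurd h om_ne_one
      | exact absurd h om_sq_ne_one.symm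
      | exact absurd h om_sq_ne_one
      | exact absurd h om_sq_ne_om.symm
      | exact absurd h om_sq_ne_om

lemma ofC_inj : Function.Injective ofC := by
  intro p q h
  have h0 : ofC p 0 = ofC q 0 := congrArg (fun v : E 4 => v 0) h
  have h1 : ofC p 1 = ofC q 1 := congrArg (fun v : E 4 => v 1) h
  have h2 : ofC p 2 = ofC q 2 := congrArg (fun v : E 4 => v 2) h
  have h3 : ofC p 3 = ofC q 3 := congrArg (fun v : E 4 => v 3) h
  rw [ofC_0, ofC_0] at h0
  rw [ofC_1, ofC_1] at h1
  rw [ofC_2, ofC_2] at h2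
  rw [ofC_3, ofC_3] at h3
  exact Prod.ext (Complex.ext h0 h1) (Complex.ext h2 h3)


theorem stmt17 (z₁ z₂ : ℂ) (h1 : ‖z₁‖ = 1) (h2 : ‖z₂‖ = 1) :
    ∀ f : MvPolynomial (Fin 4) ℝ, f.totalDegree ≤ 2 →
      (∑ x ∈ ((Finset.univ : Finset (Fin 3)).image fun m : Fin 3 =>
            ofC (z₁ * Complex.exp (2 * Real.pi * Complex.I * ((m : ℕ) : ℂ) / 3), 0)) ∪
          ((Finset.univ : Finset (Fin 3)).image fun m : Fin 3 =>
            ofC (0, z₂ * Complex.exp (2 * Real.pi * Complex.I * ((m : ℕ) : ℂ) / 3))),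
          evalE x f) / 6 =
        (μH[3] (Sph 3)).toReal⁻¹ * ∫ x in Sph 3, evalE x f ∂μH[3] := by
  intro f hf
  have hz₁ : z₁ ≠ 0 := fun h => by rw [h] at h1; simp at h1
  have hz₂ : z₂ ≠ 0 := fun h => by rw [h] at h2; simp at h2
  simp only [show ∀ m : Fin 3, Complex.exp (2 * Real.pi * Complex.I * ((m:ℕ):ℂ) / 3) = cbr m
    from fun _ => rfl]
  -- the two point families
  set P : Fin 3 → E 4 := fun m => ofC (z₁ * cbr m, 0) with hP
  set Q : Fin 3 → E 4 := fun m => ofC (0, z₂ * cbr m) with hQ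
  have hPinj : ∀ x ∈ (Finset.univ : Finset (Fin 3)), ∀ y ∈ Finset.univ, P x = P y → x = y := by
    intro x _ y _ h
    have := ofC_inj h
    have h' : z₁ * cbr x = z₁ * cbr y := congrArg Prod.fst this
    exact cbr_inj (mul_left_cancel₀ hz₁ h')
  have hQinj : ∀ x ∈ (Finset.univ : Finset (Fin 3)), ∀ y ∈ Finset.univ, Q x = Q y → x = y := by
    intro x _ y _ h
    have := ofC_inj h
    have h' : z₂ * cbr x = z₂ * cbr y := congrArg Prod.snd this
    exact cbr_inj (mul_left_cancel₀ hz₂ h')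
  have hdisj : Disjoint (Finset.univ.image P) (Finset.univ.image Q) := by
    rw [Finset.disjoint_left]
    intro x hx hx'
    obtain ⟨m, _, hm⟩ := Finset.mem_image.mp hx
    obtain ⟨m', _, hm'⟩ := Finset.mem_image.mp hx'
    have := ofC_inj (hm.trans hm'.symm)
    have h' : z₁ * cbr m = 0 := congrArg Prod.fst this
    rcases mul_eq_zero.mp h' with h'' | h''
    · exact hz₁ h''
    · exact Complex.exp_ne_zero _ h''
  -- split the sum
  have hsplit : ∀ g : E 4 → ℝ,
      ∑ x ∈ (Finset.univ.image P ∪ Finset.univ.image Q), g x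
        = ∑ m : Fin 3, g (P m) + ∑ m : Fin 3, g (Q m) := fun g => by
    rw [Finset.sum_union hdisj, Finset.sum_image hPinj, Finset.sum_image hQinj]
  -- expansion of evalE into monomials
  have hexp : ∀ x : E 4, evalE x f
      = ∑ d ∈ f.support, coeff d f * ∏ i : Fin 4, x i ^ d i := fun x => by
    rw [evalE, MvPolynomial.eval_eq']
  have hdeg : ∀ d ∈ f.support, d 0 + d 1 + d 2 + d 3 ≤ 2 := by
    intro d hd
    have h := MvPolynomial.le_totalDegree hd
    have h2 : (d.sum fun _ e => e) = ∑ i : Fin 4, d i :=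
      Finsupp.sum_fintype _ _ fun _ => rfl
    rw [h2, Fin.sum_univ_four] at h
    omega
  have hcont : ∀ d : Fin 4 →₀ ℕ, Continuous fun x : E 4 => coeff d f * ∏ i : Fin 4, x i ^ d i :=
    fun d => continuous_const.mul (continuous_finset_prod _ fun i _ =>
      ((EuclideanSpace.proj i : E 4 →L[ℝ] ℝ).continuous.pow _))
  -- main computation
  rw [hsplit (fun x => evalE x f)]
  simp only [hexp]
  rw [Finset.sum_comm, Finset.sum_comm (s := (Finset.univ : Finset (Fin 3)))]
  calc ((∑ d ∈ f.support, ∑ m : Fin 3, coeff d f * ∏ i : Fin 4, (P m) i ^ d i)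
        + ∑ d ∈ f.support, ∑ m : Fin 3, coeff d f * ∏ i : Fin 4, (Q m) i ^ d i) / 6
      = ∑ d ∈ f.support, coeff d f *
          (((∑ m : Fin 3, ∏ i : Fin 4, (P m) i ^ d i)
            + ∑ m : Fin 3, ∏ i : Fin 4, (Q m) i ^ d i) / 6) := by
        rw [← Finset.sum_add_distrib, Finset.sum_div]
        refine Finset.sum_congr rfl fun d _ => ?_
        rw [← Finset.mul_sum, ← Finset.mul_sum, ← mul_add, mul_div_assoc]
    _ = ∑ d ∈ f.support, coeff d f *
          ((μH[(3:ℝ)] (Sph 3)).toReal⁻¹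
            * ∫ x in Sph 3, (x 0 ^ d 0 * x 1 ^ d 1 * x 2 ^ d 2 * x 3 ^ d 3) ∂μH[(3:ℝ)]) := by
        refine Finset.sum_congr rfl fun d hd => ?_
        congr 1
        have hkey := key z₁ z₂ h1 h2 (d 0) (d 1) (d 2) (d 3) (hdeg d hd)
        rw [← hkey]
        congr 1
        congr 1
        · refine Finset.sum_congr rfl fun m _ => ?_
          rw [Fin.prod_univ_four]
          simp only [hP, ofC_0, ofC_1, ofC_2, ofC_3, Complex.zero_re, Complex.zero_im]
        · refine Finset.sum_congr rfl fun m _ => ?_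
          rw [Fin.prod_univ_four]
          simp only [hQ, ofC_0, ofC_1, ofC_2, ofC_3, Complex.zero_re, Complex.zero_im]
    _ = (μH[3] (Sph 3)).toReal⁻¹
          * ∫ x in Sph 3, (∑ d ∈ f.support, coeff d f * ∏ i : Fin 4, x i ^ d i) ∂μH[3] := by
        have hint : ∫ x in Sph 3,
              (∑ d ∈ f.support, coeff d f * ∏ i : Fin 4, x i ^ d i) ∂μH[(3:ℝ)]
            = ∑ d ∈ f.support, coeff d f
                * ∫ x in Sph 3, (∏ i : Fin 4, x i ^ d i) ∂μH[(3:ℝ)] := by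
          rw [integral_finset_sum _ fun d _ => integrableOn_sph (hcont d)]
          exact Finset.sum_congr rfl fun d _ => integral_const_mul _ _
        rw [hint, Finset.mul_sum]
        refine Finset.sum_congr rfl fun d _ => ?_
        rw [show (fun x : E 4 => ∏ i : Fin 4, x i ^ d i)
            = fun x : E 4 => x 0 ^ d 0 * x 1 ^ d 1 * x 2 ^ d 2 * x 3 ^ d 3 from
          funext fun x => Fin.prod_univ_four _]
        ring
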